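/- arXiv:2003.06844 — 9 statements merged into one kernel-verified Lean document; each statement's English description precedes it below -/
import Mathlib

section
/- If (≿, c) has a justifiability representation, then c satisfies Irrelevance of Unjustifiable Alternatives (IUA): for any a and any finite menu A containing a, if a ≿ b for every b ∈ c(A) and a ∉ c(A), then for every finite B ⊃ A we have c(B \ {a}) = c(B). -/
open Finset

/-- A total (weak) order: complete, transitive, antisymmetric. -/
def TotalOrderRel {α : Type*} (r : α → α → Prop) : Prop :=
  (∀ a b : α, r a b ∨ r b a) ∧ Transitive r ∧ ∀ a b : α, r a b → r b a → a = b

/-- The set of `r`-maximal elements of a set `S`. -/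
def argmaxOn {α : Type*} (r : α → α → Prop) (S : Set α) : Set α :=
  {x ∈ S | ∀ y ∈ S, r x y}

/-- The justifiable set `M(A)`: union over justifications of their maximizers on `A`. -/
def justSet {α : Type*} (M : Set (α → α → Prop)) (A : Finset α) : Set α :=
  ⋃ r ∈ M, argmaxOn r (A : Set α)

/-- A justifiability representation for `(pref, c)`. -/
def JustRep {α : Type*} (pref : α → α → Prop) (c : Finset α → Finset α)
    (M : Set (α → α → Prop)) : Prop :=
  M.Nonempty ∧ (∀ r ∈ M, TotalOrderRel r) ∧
    ∀ A : Finset α, A.Nonempty → (c A : Set α) = argmaxOn pref (justSet M A)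

/-! If `a` were justifiable in `A`, it would be `≿`-maximal among the justifiable alternatives, since it
beats the chosen ones; so `a ∉ M(A)`. Thus every justification `r` ranks some `y ∈ A` strictly above `a`, which
keeps `a` from being `r`-maximal in any `B ⊇ A` and makes `r`-maximality in `B` and in `B \ {a}` agree. Hence
`M(B \ {a}) = M(B)`, and `c` agrees on both menus. -/

lemma argmaxOn_subset {α : Type*} (r : α → α → Prop) (S : Set α) : argmaxOn r S ⊆ S :=
  fun _ hx => hx.1

lemma justSet_subset {α : Type*} (M : Set (α → α → Prop)) (A : Finset α) :
    justSet M A ⊆ A := by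
  simp only [justSet, Set.iUnion_subset_iff]
  exact fun r _ => argmaxOn_subset r _

lemma mem_argmaxOn_of_rel {α : Type*} {r : α → α → Prop} (htrans : Transitive r) {S : Set α}
    {a b : α} (hb : b ∈ argmaxOn r S) (ha : a ∈ S) (hab : r a b) : a ∈ argmaxOn r S :=
  ⟨ha, fun y hy => htrans hab (hb.2 y hy)⟩

lemma argmaxOn_diff_singleton {α : Type*} {r : α → α → Prop} (htotal : ∀ a b : α, r a b ∨ r b a)
    (htrans : Transitive r) {S T : Set α} {a : α} (haT : a ∈ T) (hTS : T ⊆ S)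
    (ha : a ∉ argmaxOn r T) : argmaxOn r (S \ {a}) = argmaxOn r S := by
  obtain ⟨y, hyT, hay⟩ : ∃ y ∈ T, ¬ r a y := by
    simpa [argmaxOn, haT] using ha
  have hya : y ≠ a := by
    rintro rfl
    exact hay ((htotal y y).elim id id)
  ext x
  constructor
  · rintro ⟨⟨hxS, -⟩, hx⟩
    have hxa : r x a := htrans (hx y ⟨hTS hyT, hya⟩) ((htotal a y).resolve_left hay)
    refine ⟨hxS, fun z hz => ?_⟩
    by_cases hza : z = a
    · exact hza ▸ hxa
    · exact hx z ⟨hz, hza⟩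
  · rintro ⟨hxS, hx⟩
    have hxa : x ≠ a := by
      rintro rfl
      exact ha ⟨haT, fun z hz => hx z (hTS hz)⟩
    exact ⟨⟨hxS, hxa⟩, fun z hz => hx z hz.1⟩

lemma justSet_erase {α : Type*} [DecidableEq α] {M : Set (α → α → Prop)}
    (hM : ∀ r ∈ M, TotalOrderRel r) {A B : Finset α} {a : α} (haA : a ∈ A) (hAB : A ⊆ B)
    (ha : a ∉ justSet M A) : justSet M (B.erase a) = justSet M B := by
  simp only [justSet, Set.mem_iUnion, not_exists] at ha ⊢
  refine Set.iUnion₂_congr fun r hr => ?_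
  obtain ⟨htotal, htrans, -⟩ := hM r hr
  rw [Finset.coe_erase]
  exact argmaxOn_diff_singleton htotal htrans haA (by exact_mod_cast hAB) (ha r hr)

theorem justRep_IUA_general {α : Type*} [DecidableEq α] (pref : α → α → Prop)
    (c : Finset α → Finset α)
    (htrans : Transitive pref)
    (hne : ∀ A : Finset α, A.Nonempty → (c A).Nonempty)
    (M : Set (α → α → Prop)) (hrep : JustRep pref c M) :
    ∀ (A : Finset α) (a : α), a ∈ A → (∀ b ∈ c A, pref a b) → a ∉ c A →
      ∀ B : Finset α, A ⊆ B → c (B.erase a) = c B := by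
  intro A a haA hdom hanc B hAB
  obtain ⟨-, hM, hc⟩ := hrep
  obtain ⟨b, hb⟩ := hne A ⟨a, haA⟩
  have hbA : b ∈ argmaxOn pref (justSet M A) := by
    rw [← hc A ⟨a, haA⟩]
    exact hb
  have haM : a ∉ justSet M A := fun h => hanc <| by
    rw [← Finset.mem_coe, hc A ⟨a, haA⟩]
    exact mem_argmaxOn_of_rel htrans hbA h (hdom b hb)
  have hbB : b ∈ B.erase a :=
    Finset.mem_erase.2 ⟨ne_of_mem_of_not_mem hb hanc,
      hAB (justSet_subset M A (argmaxOn_subset _ _ hbA))⟩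
  apply Finset.coe_injective
  rw [hc _ ⟨b, hbB⟩, hc _ ⟨a, hAB haA⟩, justSet_erase hM haA hAB haM]

/-- a justifiability representation implies IUA. -/
theorem justRep_IUA {α : Type*} [DecidableEq α] (pref : α → α → Prop)
    (c : Finset α → Finset α)
    (hcomp : ∀ a b : α, pref a b ∨ pref b a) (htrans : Transitive pref)
    (hsub : ∀ A : Finset α, c A ⊆ A)
    (hne : ∀ A : Finset α, A.Nonempty → (c A).Nonempty)
    (M : Set (α → α → Prop)) (hrep : JustRep pref c M) :
    ∀ (A : Finset α) (a : α), a ∈ A → (∀ b ∈ c A, pref a b) → a ∉ c A →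
      ∀ B : Finset α, A ⊆ B → c (B.erase a) = c B :=
  justRep_IUA_general pref c htrans hne M hrep
end

section
/- The relation 'exclusion from below' ▷ is transitive in the menu-item sense: if X ▷ x, Y ▷ y, and x ∈ Y, then (X ∪ Y) \ {x, y} ▷ y. -/
/-!
Put `B = {y} ∪ X ∪ Y`. By IUA, an alternative excluded from below by some subset of `B` can be
deleted from `B` without changing the choice; hence `y ∉ c B = c (B \ {x})`, and
`B \ {x}` is exactly `{y} ∪ ((X ∪ Y) \ {x, y})`. Dominance of `y` over `X` goes through `x`.
-/

open Finset

/-- Irrelevance of Unjustifiable Alternatives. -/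
def IUA {α : Type*} [DecidableEq α] (pref : α → α → Prop)
    (c : Finset α → Finset α) : Prop :=
  ∀ (A : Finset α) (a : α), a ∈ A → (∀ b ∈ c A, pref a b) → a ∉ c A →
    ∀ B : Finset α, A ⊆ B → c (B.erase a) = c B

/-- Optimization: all chosen elements are indifferent. -/
def Optimization {α : Type*} (pref : α → α → Prop) (c : Finset α → Finset α) : Prop :=
  ∀ A : Finset α, A.Nonempty → ∀ a ∈ c A, ∀ b ∈ c A, pref a b ∧ pref b a

/-- `A` excludes `b` from below: `b ∉ c(A ∪ {b})` and `b ≿ a` for all `a ∈ A`. -/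
def ExclBelow {α : Type*} [DecidableEq α] (pref : α → α → Prop)
    (c : Finset α → Finset α) (A : Finset α) (b : α) : Prop :=
  b ∉ c (insert b A) ∧ ∀ x ∈ A, pref b x

theorem ExclBelow.choice_erase_eq {α : Type*} [DecidableEq α] {pref : α → α → Prop}
    {c : Finset α → Finset α} (hsub : ∀ A : Finset α, c A ⊆ A) (hIUA : IUA pref c)
    {A B : Finset α} {b : α} (h : ExclBelow pref c A b) (hAB : insert b A ⊆ B) :
    c (B.erase b) = c B := by
  refine hIUA (insert b A) b (mem_insert_self b A) (fun a ha => ?_) h.1 B hAB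
  rcases mem_insert.mp (hsub _ ha) with rfl | haA
  · exact absurd ha h.1
  · exact h.2 a haA

theorem ExclBelow.notMem_choice {α : Type*} [DecidableEq α] {pref : α → α → Prop}
    {c : Finset α → Finset α} (hsub : ∀ A : Finset α, c A ⊆ A) (hIUA : IUA pref c)
    {A B : Finset α} {b : α} (h : ExclBelow pref c A b) (hAB : insert b A ⊆ B) :
    b ∉ c B := by
  rw [← h.choice_erase_eq hsub hIUA hAB]
  exact fun hb => notMem_erase b B (hsub _ hb)

theorem Finset.insert_sdiff_pair_eq_erase_insert {α : Type*} [DecidableEq α] {s : Finset α}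
    {x y : α} (hyx : y ≠ x) : insert y (s \ {x, y}) = (insert y s).erase x := by
  ext a
  by_cases hay : a = y <;> simp [hay, hyx, and_comm]

theorem exclBelow_trans_general {α : Type*} [DecidableEq α] (pref : α → α → Prop)
    (c : Finset α → Finset α)
    (htrans : Transitive pref)
    (hsub : ∀ A : Finset α, c A ⊆ A)
    (hIUA : IUA pref c)
    (X Y : Finset α) (x y : α) (hyY : y ∉ Y)
    (hX : ExclBelow pref c X x) (hY : ExclBelow pref c Y y) (hxY : x ∈ Y) :
    ExclBelow pref c ((X ∪ Y) \ {x, y}) y := by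
  have hyx : y ≠ x := fun h => hyY (h ▸ hxY)
  have hXB : insert x X ⊆ insert y (X ∪ Y) :=
    insert_subset (mem_insert_of_mem (mem_union_right X hxY))
      (subset_union_left.trans (subset_insert y _))
  have hYB : insert y Y ⊆ insert y (X ∪ Y) := insert_subset_insert y subset_union_right
  refine ⟨?_, fun a ha => ?_⟩
  · rw [insert_sdiff_pair_eq_erase_insert hyx, hX.choice_erase_eq hsub hIUA hXB]
    exact hY.notMem_choice hsub hIUA hYB
  · rcases mem_union.mp (mem_sdiff.mp ha).1 with haX | haY
    · exact htrans (hY.2 x hxY) (hX.2 a haX)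
    · exact hY.2 a haY

/-- exclusion from below is transitive in the menu-item sense. -/
theorem exclBelow_trans {α : Type*} [DecidableEq α] (pref : α → α → Prop)
    (c : Finset α → Finset α)
    (hcomp : ∀ a b : α, pref a b ∨ pref b a) (htrans : Transitive pref)
    (hsub : ∀ A : Finset α, c A ⊆ A)
    (hne : ∀ A : Finset α, A.Nonempty → (c A).Nonempty)
    (hIUA : IUA pref c)
    (X Y : Finset α) (x y : α) (hxX : x ∉ X) (hyY : y ∉ Y)
    (hX : ExclBelow pref c X x) (hY : ExclBelow pref c Y y) (hxY : x ∈ Y) :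
    ExclBelow pref c ((X ∪ Y) \ {x, y}) y :=
  exclBelow_trans_general pref c htrans hsub hIUA X Y x y hyY hX hY hxY
end

section
/- Suppose A is a finite menu and a ∈ A is such that a ≿ c(A) and a ∉ c(A) (i.e., A \ {a} excludes a). Let A̲ = c(A) ∪ {x ∈ A : c(A) ≻ x} be the set of items in A weakly worse than the chosen items. Then, assuming c satisfies IUA and Optimization, A̲ excludes a from below: a ≿ x for all x ∈ A̲ and a ∉ c(A̲ ∪ {a}). -/
/-!
By completeness and Optimization, the alternatives of `A` outside `A̲ ∪ {a}` are exactly the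
unchosen ones weakly better than `c(A)`. Deleting them one at a time, IUA keeps the choice equal
to `c(A)` at every step, so `c(A̲ ∪ {a}) = c(A)`, which does not contain `a`.
-/

open Finset

open scoped Classical

theorem IUA.choice_sdiff_eq {α : Type*} [DecidableEq α] {pref : α → α → Prop}
    {c : Finset α → Finset α} (hIUA : IUA pref c) {B D : Finset α} (hDB : D ⊆ B)
    (hD : ∀ x ∈ D, (∀ b ∈ c B, pref x b) ∧ x ∉ c B) : c (B \ D) = c B := by
  induction D using Finset.induction_on with
  | empty => rw [sdiff_empty]
  | insert x D hxD ih =>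
    have hcD : c (B \ D) = c B := ih ((subset_insert x D).trans hDB) fun y hy =>
      hD y (mem_insert_of_mem hy)
    have hxB : x ∈ B \ D := mem_sdiff.mpr ⟨hDB (mem_insert_self x D), hxD⟩
    obtain ⟨hxbetter, hxc⟩ := hD x (mem_insert_self x D)
    rw [sdiff_insert, ← hcD]
    exact hIUA (B \ D) x hxB (hcD ▸ hxbetter) (hcD ▸ hxc) (B \ D) subset_rfl

theorem Optimization.forall_pref_of_not_strictlyBelow {α : Type*} {pref : α → α → Prop}
    {c : Finset α → Finset α} (hOpt : Optimization pref c)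
    (hcomp : ∀ a b : α, pref a b ∨ pref b a) (htrans : Transitive pref)
    {A : Finset α} (hA : A.Nonempty) {x : α} (hx : ¬ ∀ b ∈ c A, pref b x ∧ ¬ pref x b) :
    ∀ b ∈ c A, pref x b := by
  push Not at hx
  obtain ⟨b₀, hb₀, hxb₀⟩ := hx
  have hxb₀ : pref x b₀ := (hcomp x b₀).elim id hxb₀
  exact fun b hb => htrans hxb₀ (hOpt A hA b₀ hb₀ b hb).1

/-- if `A \ {a}` excludes `a`, then the set of items weakly worse than
the chosen items excludes `a` from below. -/
theorem exclBelow_of_excluded {α : Type*} [DecidableEq α] (pref : α → α → Prop)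
    (c : Finset α → Finset α)
    (hcomp : ∀ a b : α, pref a b ∨ pref b a) (htrans : Transitive pref)
    (hsub : ∀ A : Finset α, c A ⊆ A)
    (hne : ∀ A : Finset α, A.Nonempty → (c A).Nonempty)
    (hIUA : IUA pref c) (hOpt : Optimization pref c)
    (A : Finset α) (a : α) (haA : a ∈ A)
    (hbetter : ∀ b ∈ c A, pref a b) (hnotchosen : a ∉ c A) :
    ExclBelow pref c
      (c A ∪ A.filter fun x => ∀ b ∈ c A, pref b x ∧ ¬ pref x b) a := by
  set L := c A ∪ A.filter fun x => ∀ b ∈ c A, pref b x ∧ ¬ pref x b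
  have hA : A.Nonempty := ⟨a, haA⟩
  have hLA : insert a L ⊆ A :=
    insert_subset haA (union_subset (hsub A) (filter_subset _ A))
  have hrest : ∀ x ∈ A \ insert a L, (∀ b ∈ c A, pref x b) ∧ x ∉ c A := by
    intro x hx
    obtain ⟨hxA, hxL⟩ := mem_sdiff.mp hx
    refine ⟨hOpt.forall_pref_of_not_strictlyBelow hcomp htrans hA fun hlow => ?_,
      fun hxc => ?_⟩
    · exact hxL (mem_insert_of_mem (mem_union_right _ (mem_filter.mpr ⟨hxA, hlow⟩)))
    · exact hxL (mem_insert_of_mem (mem_union_left _ hxc))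
  have hcL : c (insert a L) = c A := by
    rw [← Finset.sdiff_sdiff_eq_self hLA]
    exact hIUA.choice_sdiff_eq sdiff_subset hrest
  refine ⟨hcL ▸ hnotchosen, fun x hx => ?_⟩
  rcases mem_union.mp hx with hxc | hxlow
  · exact hbetter x hxc
  · obtain ⟨b, hb⟩ := hne A hA
    exact htrans (hbetter b hb) ((mem_filter.mp hxlow).2 b hb).1
end

section
/- Let R be an irreflexive, transitive, and proper menu-item relation on a set 𝒜, and let x, y ∈ 𝒜 be distinct elements such that ¬({y} R x). Then the transitive closure of R ∪ {({x}, y)} is irreflexive and proper. -/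
/-!
Every fact in the transitive closure of `R ∪ {({x}, y)}` satisfies an explicit invariant: it is
either a fact of `R`, or both `x` and its target can be `R`-derived from its menu together with `y`.
The invariant is transitive because a cut of the form `A R a`, `B R b` with `b ∈ A`, `a ∈ B`
removes `a` and `b` at once, so derivations may loop through the two cut items. A fact with empty
menu would give an `R`-derivation of `x` from `{y}`, which properness and `¬ {y} R x` forbid.
-/

open Finset

/-- A menu-item relation is proper if `X R x` implies `X ≠ ∅`. -/
def MProper {α : Type*} (R : Finset α → α → Prop) : Prop :=
  ∀ X x, R X x → X ≠ ∅

/-- A menu-item relation is irreflexive if `X R x` implies `x ∉ X`. -/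
def MIrrefl {α : Type*} (R : Finset α → α → Prop) : Prop :=
  ∀ X x, R X x → x ∉ X

/-- Transitivity for menu-item relations. -/
def MTrans {α : Type*} [DecidableEq α] (R : Finset α → α → Prop) : Prop :=
  ∀ X x Y y, R X x → R Y y → x ∈ Y → R ((X ∪ Y) \ {x, y}) y

/-- The transitive closure of a menu-item relation: the smallest transitive
menu-item relation containing it. -/
def MTransClosure {α : Type*} [DecidableEq α] (R : Finset α → α → Prop) :
    Finset α → α → Prop :=
  fun X x => ∀ S : Finset α → α → Prop, MTrans S → (∀ Y y, R Y y → S Y y) → S X x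

section

variable {α : Type*} {R : Finset α → α → Prop}

def MDerives (R : Finset α → α → Prop) (U : Finset α) (z : α) : Prop :=
  z ∈ U ∨ ∃ A ⊆ U, R A z

namespace MDerives

variable {U V : Finset α} {z : α}

lemma of_mem (h : z ∈ U) : MDerives R U z := Or.inl h

lemma of_rel (h : R U z) : MDerives R U z := Or.inr ⟨U, subset_rfl, h⟩

lemma mono (h : MDerives R U z) (hUV : U ⊆ V) : MDerives R V z :=
  h.imp (hUV ·) fun ⟨A, hAU, hA⟩ => ⟨A, hAU.trans hUV, hA⟩

lemma not_singleton {x y : α} (hPr : MProper R) (hxy : x ≠ y) (hnR : ¬ R {y} x) :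
    ¬ MDerives R {y} x := by
  rintro (hx | ⟨A, hA, hAx⟩)
  · exact hxy (mem_singleton.1 hx)
  · rcases subset_singleton_iff.1 hA with rfl | rfl
    · exact hPr _ _ hAx rfl
    · exact hnR hAx

end MDerives

namespace MTrans

variable [DecidableEq α] {U : Finset α}

lemma mDerives_of_cycle (hTr : MTrans R) {a b : α} (hab : a ≠ b)
    (ha : MDerives R (insert b U) a) (hb : MDerives R (insert a U) b) : MDerives R U b := by
  rcases hb with hb | ⟨B, hBU, hB⟩
  · exact .of_mem ((mem_insert.1 hb).resolve_left hab.symm)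
  by_cases haB : a ∈ B
  · rcases ha with ha | ⟨A, hAU, hA⟩
    · rw [insert_eq_of_mem ((mem_insert.1 ha).resolve_left hab)] at hBU
      exact (MDerives.of_rel hB).mono hBU
    · refine Or.inr ⟨_, ?_, hTr A a B b hA hB haB⟩
      intro v hv
      simp only [mem_sdiff, mem_union, mem_insert, mem_singleton, not_or] at hv
      rcases hv with ⟨hvA | hvB, hva, hvb⟩
      · exact (mem_insert.1 (hAU hvA)).resolve_left hvb
      · exact (mem_insert.1 (hBU hvB)).resolve_left hva
  · refine Or.inr ⟨B, fun v hv => ?_, hB⟩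
    exact (mem_insert.1 (hBU hv)).resolve_left (ne_of_mem_of_not_mem hv haB)

lemma mDerives_cut (hTr : MTrans R) {w z : α} (hz : MDerives R (insert w U) z)
    (hw : MDerives R U w) : MDerives R U z := by
  obtain rfl | hwz := eq_or_ne w z
  · exact hw
  · exact hTr.mDerives_of_cycle hwz (hw.mono (subset_insert z U)) hz

end MTrans

variable [DecidableEq α]

def AdjoinInvariant (R : Finset α → α → Prop) (x y : α) (X : Finset α) (z : α) : Prop :=
  X ≠ ∅ ∧ z ∉ X ∧ (R X z ∨ MDerives R (insert y X) x ∧ MDerives R (insert y X) z)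

namespace AdjoinInvariant

variable {x y : α} {X : Finset α} {z : α}

lemma of_rel (hIrr : MIrrefl R) (hPr : MProper R) (h : R X z) : AdjoinInvariant R x y X z :=
  ⟨hPr X z h, hIrr X z h, Or.inl h⟩

lemma singleton (hxy : x ≠ y) : AdjoinInvariant R x y {x} y :=
  ⟨singleton_ne_empty x, by simpa using hxy.symm,
    Or.inr ⟨.of_mem (by simp), .of_mem (mem_insert_self y _)⟩⟩

lemma mDerives (h : AdjoinInvariant R x y X z) : MDerives R (insert y X) z :=
  h.2.2.elim (fun h => (MDerives.of_rel h).mono (subset_insert y X)) And.right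

lemma mTrans (hTr : MTrans R) (hPr : MProper R) (hxy : x ≠ y) (hnR : ¬ R {y} x) :
    MTrans (AdjoinInvariant R x y) := by
  intro X a Y b hXa hYb haY
  set Z := (X ∪ Y) \ {a, b}
  have hab : a ≠ b := ne_of_mem_of_not_mem haY hYb.2.1
  have hXZ : insert y X ⊆ insert b (insert y Z) := by
    intro v; have := hXa.2.1; grind
  have hYZ : insert y Y ⊆ insert a (insert y Z) := by
    intro v; have := hYb.2.1; grind
  have ha : MDerives R (insert y Z) a :=
    hTr.mDerives_of_cycle hab.symm (hYb.mDerives.mono hYZ) (hXa.mDerives.mono hXZ)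
  have hb : MDerives R (insert y Z) b :=
    hTr.mDerives_of_cycle hab (hXa.mDerives.mono hXZ) (hYb.mDerives.mono hYZ)
  have hZb : R Z b ∨ MDerives R (insert y Z) x ∧ MDerives R (insert y Z) b := by
    rcases hXa.2.2, hYb.2.2 with ⟨hXa' | ⟨hxX, -⟩, hYb' | ⟨hxY, -⟩⟩
    · exact Or.inl (hTr X a Y b hXa' hYb' haY)
    · exact Or.inr ⟨hTr.mDerives_cut (hxY.mono hYZ) ha, hb⟩
    all_goals exact Or.inr ⟨hTr.mDerives_cut (hxX.mono hXZ) hb, hb⟩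
  refine ⟨?_, by simp [Z], hZb⟩
  rintro hZ
  rcases hZb with hR | ⟨hx, -⟩
  · exact hPr Z b hR hZ
  · rw [hZ, insert_empty] at hx
    exact MDerives.not_singleton hPr hxy hnR hx

end AdjoinInvariant

end

/-- Lemma 3: adjoining a single pair `({x}, y)` with `¬({y} R x)`
and taking the transitive closure preserves irreflexivity and properness. -/
theorem transClosure_adjoin_irrefl_proper {α : Type*} [DecidableEq α]
    (R : Finset α → α → Prop)
    (hIrr : MIrrefl R) (hTr : MTrans R) (hPr : MProper R)
    (x y : α) (hxy : x ≠ y) (hnR : ¬ R {y} x) :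
    MIrrefl (MTransClosure fun X z => R X z ∨ (X = {x} ∧ z = y)) ∧
    MProper (MTransClosure fun X z => R X z ∨ (X = {x} ∧ z = y)) := by
  have hInv : ∀ X z, MTransClosure (fun X z => R X z ∨ (X = {x} ∧ z = y)) X z →
      AdjoinInvariant R x y X z := by
    refine fun X z h => h _ (AdjoinInvariant.mTrans hTr hPr hxy hnR) ?_
    rintro Y w (h | ⟨rfl, rfl⟩)
    · exact .of_rel hIrr hPr h
    · exact .singleton hxy
  exact ⟨fun X z h => (hInv X z h).2.1, fun X z h => (hInv X z h).1⟩
end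

section
/- Every irreflexive, transitive, and proper menu-item relation R on a set 𝒜 can be extended (via Zorn's Lemma) to an irreflexive, transitive, and proper menu-item relation R⁺ such that for all distinct x, y ∈ 𝒜, either {x} R⁺ y or {y} R⁺ x, and moreover for every finite X and every y, X R y implies there exists x ∈ X with {x} R⁺ y. -/
/-!
Zorn's lemma gives a maximal irreflexive, transitive, proper relation `V ⊇ R`. Suppose neither
`{x} V y` nor `{y} V x`, and let `N` be the transitive closure of `V` with `({x}, y)` adjoined.
`N` is irreflexive, since a cut never puts its conclusion into the menu, and it is proper: a cut
yields the empty menu only from a cycle `{a} N b`, `{b} N a`. Such a cycle is derived from finitely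
many facts, and a finite irreflexive, transitive, proper relation is modelled by a ranking `f`
(`X V z` implies `f z < f c` for some `c ∈ X`) that can be chosen with `f y < f x`; the closure
respects the ranking, so the cycle cannot exist. Maximality then makes `V` total on singletons.
Finally, if `{y} V a` for every `a ∈ X` while `X V y`, cutting the `a` out of `X` one by one
ends in `∅ V y`.
-/

open Finset

section MenuItemRelations

variable {α : Type*}

def MRank {γ : Type*} [Preorder γ] (f : α → γ) : Finset α → α → Prop :=
  fun X y => ∃ c ∈ X, f y < f c

def MRestrict (M : Finset α → α → Prop) (β : Finset α) : Finset α → α → Prop :=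
  fun X y => M X y ∧ X ⊆ β ∧ y ∈ β

def MSupportedOn (M : Finset α → α → Prop) (β : Finset α) : Prop :=
  ∀ X y, M X y → X ⊆ β ∧ y ∈ β

def MAddPair (M : Finset α → α → Prop) (x y : α) : Finset α → α → Prop :=
  fun X z => M X z ∨ (X = {x} ∧ z = y)

lemma sSup_apply_apply_iff {c : Set (Finset α → α → Prop)} {X : Finset α} {x : α} :
    sSup c X x ↔ ∃ S ∈ c, S X x := by
  simp

lemma mIrrefl_sSup {c : Set (Finset α → α → Prop)} (h : ∀ S ∈ c, MIrrefl S) :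
    MIrrefl (sSup c) := fun X x hX => by
  obtain ⟨S, hS, hSX⟩ := sSup_apply_apply_iff.mp hX
  exact h S hS X x hSX

lemma mProper_sSup {c : Set (Finset α → α → Prop)} (h : ∀ S ∈ c, MProper S) :
    MProper (sSup c) := fun X x hX => by
  obtain ⟨S, hS, hSX⟩ := sSup_apply_apply_iff.mp hX
  exact h S hS X x hSX

lemma le_mAddPair (M : Finset α → α → Prop) (x y : α) : M ≤ MAddPair M x y :=
  fun _ _ => Or.inl

lemma mProper_mAddPair {M : Finset α → α → Prop} (hPr : MProper M) (x y : α) :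
    MProper (MAddPair M x y) := by
  rintro X z (hM | ⟨rfl, rfl⟩)
  exacts [hPr X z hM, singleton_ne_empty x]

lemma mIrrefl_mRestrict {M : Finset α → α → Prop} (hIrr : MIrrefl M) (β : Finset α) :
    MIrrefl (MRestrict M β) :=
  fun X y h => hIrr X y h.1

lemma mProper_mRestrict {M : Finset α → α → Prop} (hPr : MProper M) (β : Finset α) :
    MProper (MRestrict M β) :=
  fun X y h => hPr X y h.1

lemma mSupportedOn_mRestrict (M : Finset α → α → Prop) (β : Finset α) :
    MSupportedOn (MRestrict M β) β :=
  fun _ _ h => h.2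

lemma mIrrefl_mAddPair {M : Finset α → α → Prop} (hIrr : MIrrefl M) {x y : α} (hxy : x ≠ y) :
    MIrrefl (MAddPair M x y) := by
  rintro X z (hM | ⟨rfl, rfl⟩)
  exacts [hIrr X z hM, notMem_singleton.mpr hxy.symm]

variable [DecidableEq α]

lemma IsChain.mTrans_sSup {c : Set (Finset α → α → Prop)} (hc : IsChain (· ≤ ·) c)
    (h : ∀ S ∈ c, MTrans S) : MTrans (sSup c) := by
  intro X x Y y hX hY hxY
  obtain ⟨S, hS, hSX⟩ := sSup_apply_apply_iff.mp hX
  obtain ⟨T, hT, hTY⟩ := sSup_apply_apply_iff.mp hY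
  refine sSup_apply_apply_iff.mpr ?_
  rcases hc.total hS hT with hST | hTS
  · exact ⟨T, hT, h T hT _ _ _ _ (hST _ _ hSX) hTY hxY⟩
  · exact ⟨S, hS, h S hS _ _ _ _ hSX (hTS _ _ hTY) hxY⟩

lemma mTrans_mRestrict {M : Finset α → α → Prop} (hTr : MTrans M) (β : Finset α) :
    MTrans (MRestrict M β) := by
  rintro X x Y y ⟨hX, hXβ, -⟩ ⟨hY, hYβ, hyβ⟩ hxY
  exact ⟨hTr X x Y y hX hY hxY, sdiff_subset.trans (union_subset hXβ hYβ), hyβ⟩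

lemma mTrans_mRank {γ : Type*} [Preorder γ] (f : α → γ) : MTrans (MRank f) := by
  rintro X x Y y ⟨c, hcX, hxc⟩ ⟨d, hdY, hyd⟩ -
  by_cases hdx : d = x
  · subst hdx
    refine ⟨c, mem_sdiff.mpr ⟨mem_union_left Y hcX, ?_⟩, hyd.trans hxc⟩
    simp only [mem_insert, mem_singleton, not_or]
    exact ⟨ne_of_apply_ne f hxc.ne', ne_of_apply_ne f (hyd.trans hxc).ne'⟩
  · refine ⟨d, mem_sdiff.mpr ⟨mem_union_right X hdY, ?_⟩, hyd⟩
    simp only [mem_insert, mem_singleton, not_or]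
    exact ⟨hdx, ne_of_apply_ne f hyd.ne'⟩

lemma mTrans_notMem : MTrans fun (X : Finset α) x => x ∉ X := by
  intro _ _ _ _ _ _ _
  simp

lemma le_mTransClosure (R : Finset α → α → Prop) : R ≤ MTransClosure R :=
  fun X x hX _ _ hRS => hRS X x hX

lemma mTrans_mTransClosure (R : Finset α → α → Prop) : MTrans (MTransClosure R) :=
  fun X x Y y hX hY hxY S hS hRS => hS X x Y y (hX S hS hRS) (hY S hS hRS) hxY

lemma mTransClosure_le {R S : Finset α → α → Prop} (hS : MTrans S) (hRS : R ≤ S) :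
    MTransClosure R ≤ S :=
  fun _ _ hX => hX S hS hRS

lemma MIrrefl.mTransClosure {R : Finset α → α → Prop} (hIrr : MIrrefl R) :
    MIrrefl (MTransClosure R) :=
  mTransClosure_le mTrans_notMem hIrr

lemma eq_singleton_of_union_sdiff_eq_empty {X Y : Finset α} {x y : α} (hX : X ≠ ∅)
    (hxX : x ∉ X) (hyY : y ∉ Y) (hxY : x ∈ Y) (h : (X ∪ Y) \ {x, y} = ∅) :
    X = {y} ∧ Y = {x} := by
  rw [sdiff_eq_empty_iff_subset, union_subset_iff] at h
  obtain ⟨u, hu⟩ := nonempty_iff_ne_empty.mpr hX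
  constructor <;> ext v <;> grind

lemma MProper.mTransClosure {R : Finset α → α → Prop} (hPr : MProper R) (hIrr : MIrrefl R)
    (hcyc : ∀ a b, MTransClosure R {a} b → ¬ MTransClosure R {b} a) :
    MProper (MTransClosure R) := by
  have hle : MTransClosure R ≤ fun X x => MTransClosure R X x ∧ X ≠ ∅ := by
    refine mTransClosure_le ?_ fun X x hX => ⟨le_mTransClosure R X x hX, hPr X x hX⟩
    rintro X x Y y ⟨hX, hX₀⟩ ⟨hY, -⟩ hxY
    refine ⟨mTrans_mTransClosure R X x Y y hX hY hxY, fun h => ?_⟩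
    obtain ⟨rfl, rfl⟩ := eq_singleton_of_union_sdiff_eq_empty hX₀
      (hIrr.mTransClosure X x hX) (hIrr.mTransClosure Y y hY) hxY h
    exact hcyc x y hY hX
  exact fun X x h => (hle X x h).2

lemma mTransClosure_mRestrict {R : Finset α → α → Prop} {X : Finset α} {x : α}
    (h : MTransClosure R X x) :
    ∃ β₀ : Finset α, ∀ β, β₀ ⊆ β → MTransClosure (MRestrict R β) X x := by
  refine mTransClosure_le (S := fun X x => ∃ β₀ : Finset α, ∀ β, β₀ ⊆ β →
    MTransClosure (MRestrict R β) X x) ?_ ?_ X x h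
  · rintro X x Y y ⟨β₁, h₁⟩ ⟨β₂, h₂⟩ hxY
    exact ⟨β₁ ∪ β₂, fun β hβ => mTrans_mTransClosure _ X x Y y
      (h₁ β (subset_union_left.trans hβ)) (h₂ β (subset_union_right.trans hβ)) hxY⟩
  · intro X x hX
    exact ⟨insert x X, fun β hβ => le_mTransClosure _ X x
      ⟨hX, (subset_insert x X).trans hβ, hβ (mem_insert_self x X)⟩⟩

section Singletons

variable {M : Finset α → α → Prop} (hIrr : MIrrefl M) (hTr : MTrans M) (hPr : MProper M)
include hIrr hTr hPr

lemma singleton_trans {a b c : α} (hab : M {a} b) (hbc : M {b} c) : M {a} c := by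
  have h := hTr {a} b {b} c hab hbc (mem_singleton_self b)
  by_cases hac : a = c
  · subst hac
    exact absurd (by grind) (hPr _ _ h)
  · have hab' : a ≠ b := fun h => hIrr _ _ hab (by simp [h])
    rwa [show ({a} ∪ {b}) \ {b, c} = ({a} : Finset α) by grind] at h

lemma exists_sink {U : Finset α} (hU : U.Nonempty)
    (hUcl : ∀ a b, a ∈ U → M {a} b → b ∈ U) : ∃ m ∈ U, ∀ z, ¬ M {m} z := by
  classical
  obtain ⟨m, hm, hmin⟩ := U.exists_min_image (fun a => #{b ∈ U | M {a} b}) hU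
  refine ⟨m, hm, fun z hmz => (hmin z (hUcl m z hm hmz)).not_gt (card_lt_card ?_)⟩
  refine (ssubset_iff_of_subset fun b hb => ?_).2 ⟨z, ?_, ?_⟩
  · rw [mem_filter] at hb ⊢
    exact ⟨hb.1, singleton_trans hIrr hTr hPr hmz hb.2⟩
  · exact mem_filter.mpr ⟨hUcl m z hm hmz, hmz⟩
  · exact fun hz => hIrr _ _ (mem_filter.mp hz).2 (mem_singleton_self z)

lemma exists_sink_below {β : Finset α} (hsupp : MSupportedOn M β) (hβ : β.Nonempty) (y : α) :
    ∃ m ∈ β, (∀ z, ¬ M {m} z) ∧ (m = y ∨ M {y} m ∨ y ∉ β) := by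
  classical
  by_cases hy : ∃ z, M {y} z
  · obtain ⟨z, hz⟩ := hy
    obtain ⟨m, hm, hsink⟩ := exists_sink hIrr hTr hPr (U := {b ∈ β | M {y} b})
      ⟨z, mem_filter.mpr ⟨(hsupp _ _ hz).2, hz⟩⟩ fun a b ha hab => mem_filter.mpr
        ⟨(hsupp _ _ hab).2, singleton_trans hIrr hTr hPr (mem_filter.mp ha).2 hab⟩
    exact ⟨m, (mem_filter.mp hm).1, hsink, Or.inr (Or.inl (mem_filter.mp hm).2)⟩
  · push Not at hy
    by_cases hyβ : y ∈ β
    · exact ⟨y, hyβ, hy, Or.inl rfl⟩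
    · obtain ⟨m, hm, hsink⟩ :=
        exists_sink hIrr hTr hPr hβ fun _ b _ hab => (hsupp _ _ hab).2
      exact ⟨m, hm, hsink, Or.inr (Or.inr hyβ)⟩

lemma not_forall_singleton_of_rel {X : Finset α} {y : α} (hXy : M X y) :
    ¬ ∀ a ∈ X, M {y} a := by
  induction X using Finset.induction_on with
  | empty => exact absurd rfl (hPr _ _ hXy)
  | insert a s ha ih =>
    intro hall
    have hy : y ∉ insert a s := hIrr _ _ hXy
    have h₁ := hTr _ _ _ _ hXy (hall a (mem_insert_self a s)) (mem_singleton_self y)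
    rw [show (insert a s ∪ {y}) \ {y, a} = s by grind] at h₁
    have h₂ := hTr _ _ _ _ h₁ hXy (mem_insert_self a s)
    rw [show (s ∪ insert a s) \ {a, y} = s by grind] at h₂
    exact ih h₂ fun b hb => hall b (mem_insert_of_mem hb)

end Singletons

def MErase (M : Finset α → α → Prop) (m : α) : Finset α → α → Prop :=
  fun X z => z ≠ m ∧ ∃ X₀, M X₀ z ∧ X = X₀.erase m

section Erase

variable {M : Finset α → α → Prop} {m : α}

lemma mIrrefl_mErase (hIrr : MIrrefl M) : MIrrefl (MErase M m) := by
  rintro _ z ⟨-, X₀, hM, rfl⟩ hz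
  exact hIrr _ _ hM (mem_of_mem_erase hz)

lemma mTrans_mErase (hTr : MTrans M) : MTrans (MErase M m) := by
  rintro _ x _ y ⟨-, X₀, hX, rfl⟩ ⟨hym, Y₀, hY, rfl⟩ hxY
  exact ⟨hym, _, hTr _ _ _ _ hX hY (mem_of_mem_erase hxY), by ext; simp; tauto⟩

lemma mProper_mErase (hPr : MProper M) (hsink : ∀ z, ¬ M {m} z) : MProper (MErase M m) := by
  rintro _ z ⟨-, X₀, hM, rfl⟩ hX
  rcases (erase_eq_empty_iff X₀ m).mp hX with rfl | rfl
  exacts [hPr _ _ hM rfl, hsink z hM]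

lemma MSupportedOn.mErase {β : Finset α} (hsupp : MSupportedOn M β) :
    MSupportedOn (MErase M m) (β.erase m) := by
  rintro _ z ⟨hzm, X₀, hM, rfl⟩
  exact ⟨erase_subset_erase m (hsupp _ _ hM).1, mem_erase.mpr ⟨hzm, (hsupp _ _ hM).2⟩⟩

lemma MTrans.rel_singleton_of_mErase (hTr : MTrans M) {x y : α} (hym : M {y} m) (hxy : x ≠ y)
    (h : MErase M m {y} x) : M {y} x := by
  obtain ⟨-, X₀, hX₀, hX⟩ := h
  by_cases hm : m ∈ X₀
  · have h := hTr _ _ _ _ hym hX₀ hm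
    rwa [show ({y} ∪ X₀) \ {m, x} = {y} by
      ext u; have := congrArg (u ∈ ·) hX; simp at this ⊢; grind] at h
  · rw [erase_eq_of_notMem hm] at hX
    rwa [hX]

lemma le_mRank_of_mErase_le (hIrr : MIrrefl M) (hPr : MProper M) {f : α → ℕ}
    (hf : MErase M m ≤ MRank f) : M ≤ MRank fun a => if a = m then 0 else f a + 1 := by
  intro X z hX
  by_cases hzm : z = m
  · subst hzm
    obtain ⟨c, hc⟩ := nonempty_iff_ne_empty.mpr (hPr X z hX)
    have hcz : c ≠ z := fun h => hIrr X z hX (h ▸ hc)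
    exact ⟨c, hc, by simp [hcz]⟩
  · obtain ⟨c, hc, hlt⟩ := hf (X.erase m) z ⟨hzm, X, hX, rfl⟩
    obtain ⟨hcm, hcX⟩ := mem_erase.mp hc
    exact ⟨c, hcX, by simpa [hzm, hcm]⟩

end Erase

/-- Peel off sinks one by one, each placed at the bottom of the ranking; choosing them among the
successors of `y` for as long as there are any puts `y` below every `x` with `¬ M {y} x`. -/
theorem exists_mRank (β : Finset α) :
    ∀ M : Finset α → α → Prop, MIrrefl M → MTrans M → MProper M → MSupportedOn M β →
      ∀ y, ∃ f : α → ℕ, M ≤ MRank f ∧ (y ∈ β → ∀ x, x ≠ y → ¬ M {y} x → f y < f x) := by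
  induction β using Finset.strongInduction with
  | H β ih =>
  intro M hIrr hTr hPr hsupp y
  rcases β.eq_empty_or_nonempty with rfl | hβ
  · exact ⟨fun _ => 0, fun X x hX => absurd (hsupp X x hX).2 (notMem_empty x),
      fun hy => absurd hy (notMem_empty y)⟩
  obtain ⟨m, hmβ, hsink, hm⟩ := exists_sink_below hIrr hTr hPr hsupp hβ y
  obtain ⟨f, hf, hfy⟩ := ih _ (erase_ssubset hmβ) (MErase M m) (mIrrefl_mErase hIrr)
    (mTrans_mErase hTr) (mProper_mErase hPr hsink) hsupp.mErase y
  refine ⟨_, le_mRank_of_mErase_le hIrr hPr hf, fun hyβ x hxy hyx => ?_⟩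
  rcases hm with rfl | hym | hyβ'
  · simp [hxy]
  · have hmy : m ≠ y := fun h => hIrr _ _ hym (by simp [h])
    have hxm : x ≠ m := fun h => hyx (h ▸ hym)
    have := hfy (mem_erase.mpr ⟨hmy.symm, hyβ⟩) x hxy
      fun h => hyx (hTr.rel_singleton_of_mErase hym hxy h)
    simp [hmy.symm, hxm, this]
  · exact absurd hyβ hyβ'

lemma mProper_mTransClosure_mAddPair {M : Finset α → α → Prop} (hIrr : MIrrefl M)
    (hTr : MTrans M) (hPr : MProper M) {x y : α} (hxy : x ≠ y) (hyx : ¬ M {y} x) :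
    MProper (MTransClosure (MAddPair M x y)) := by
  refine (mProper_mAddPair hPr x y).mTransClosure (mIrrefl_mAddPair hIrr hxy) fun a b hab hba => ?_
  obtain ⟨β₁, h₁⟩ := mTransClosure_mRestrict hab
  obtain ⟨β₂, h₂⟩ := mTransClosure_mRestrict hba
  obtain ⟨f, hf, hfy⟩ := exists_mRank (insert y (β₁ ∪ β₂)) _ (mIrrefl_mRestrict hIrr _)
    (mTrans_mRestrict hTr _) (mProper_mRestrict hPr _) (mSupportedOn_mRestrict M _) y
  have hle : MTransClosure (MRestrict (MAddPair M x y) (insert y (β₁ ∪ β₂))) ≤ MRank f := by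
    refine mTransClosure_le (mTrans_mRank f) ?_
    rintro X z ⟨hM | ⟨rfl, rfl⟩, hX, hz⟩
    · exact hf X z ⟨hM, hX, hz⟩
    · exact ⟨x, mem_singleton_self x, hfy (mem_insert_self _ _) x hxy fun h => hyx h.1⟩
  obtain ⟨_, ha, hfab⟩ := hle _ _ (h₁ _ (subset_union_left.trans (subset_insert _ _)))
  obtain ⟨_, hb, hfba⟩ := hle _ _ (h₂ _ (subset_union_right.trans (subset_insert _ _)))
  rw [mem_singleton] at ha hb
  subst ha hb
  exact lt_asymm hfab hfba

end MenuItemRelations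

/-- Szpilrajn-type extension of menu-item relations. -/
theorem menuRel_extension {α : Type*} [DecidableEq α]
    (R : Finset α → α → Prop)
    (hIrr : MIrrefl R) (hTr : MTrans R) (hPr : MProper R) :
    ∃ Rp : Finset α → α → Prop,
      MIrrefl Rp ∧ MTrans Rp ∧ MProper Rp ∧
      (∀ X x, R X x → Rp X x) ∧
      (∀ x y : α, x ≠ y → Rp {x} y ∨ Rp {y} x) ∧
      (∀ (X : Finset α) (y : α), R X y → ∃ x ∈ X, Rp {x} y) := by
  set 𝒮 : Set (Finset α → α → Prop) := {S | R ≤ S ∧ MIrrefl S ∧ MTrans S ∧ MProper S}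
  have hchain : ∀ c ⊆ 𝒮, IsChain (· ≤ ·) c → ∀ S ∈ c, ∃ ub ∈ 𝒮, ∀ T ∈ c, T ≤ ub :=
    fun c hc𝒮 hc S hS => ⟨sSup c, ⟨(hc𝒮 hS).1.trans (le_sSup hS),
      mIrrefl_sSup fun T hT => (hc𝒮 hT).2.1, hc.mTrans_sSup fun T hT => (hc𝒮 hT).2.2.1,
      mProper_sSup fun T hT => (hc𝒮 hT).2.2.2⟩, fun _ => le_sSup⟩
  obtain ⟨V, hRV, hV⟩ := zorn_le_nonempty₀ 𝒮 hchain R ⟨le_rfl, hIrr, hTr, hPr⟩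
  obtain ⟨-, hVIrr, hVTr, hVPr⟩ := hV.prop
  have htot : ∀ x y, x ≠ y → V {x} y ∨ V {y} x := by
    intro x y hxy
    by_contra! h
    have hVN := (le_mAddPair V x y).trans (le_mTransClosure _)
    have hN : MTransClosure (MAddPair V x y) ∈ 𝒮 := ⟨hRV.trans hVN,
      (mIrrefl_mAddPair hVIrr hxy).mTransClosure, mTrans_mTransClosure _,
      mProper_mTransClosure_mAddPair hVIrr hVTr hVPr hxy h.2⟩
    exact h.1 (hV.le_of_ge hN hVN _ _ (le_mTransClosure _ _ _ (Or.inr ⟨rfl, rfl⟩)))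
  refine ⟨V, hVIrr, hVTr, hVPr, hRV, htot, fun X y hXy => ?_⟩
  by_contra! h
  refine not_forall_singleton_of_rel hVIrr hVTr hVPr (hRV X y hXy) fun a ha => ?_
  exact (htot a y fun hay => hVIrr X y (hRV X y hXy) (hay ▸ ha)).resolve_left (h a ha)
end

section
/- Let R⁺ be a proper and transitive menu-item relation on 𝒜. Then for every finite X ⊆ 𝒜 and y ∈ 𝒜 with X R⁺ y, there exists x ∈ X such that ¬({y} R⁺ x). In particular, it is impossible that {x} R⁺ y and {y} R⁺ x simultaneously. -/
/-! If every `x ∈ X` satisfied `{y} R⁺ x`, transitivity through some `x ∈ X` would replace `X`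
by the strictly smaller menu `({y} ∪ X) \ {x, y}`, still related to `y` and still consisting of
elements `x'` with `{y} R⁺ x'`. Descending in this way ends at `∅ R⁺ y`, contradicting properness. -/

open Finset

section

variable {α : Type*} [DecidableEq α]

lemma singleton_union_sdiff_pair_ssubset {X : Finset α} {x : α} (y : α) (hx : x ∈ X) :
    ({y} ∪ X) \ {x, y} ⊂ X := by
  refine ssubset_of_subset_of_ssubset (b := X.erase x) ?_ (erase_ssubset hx)
  intro a ha
  simp only [mem_sdiff, mem_union, mem_insert, mem_singleton, mem_erase] at ha ⊢
  tauto

theorem MTrans.exists_mem_not_singleton_rel {R : Finset α → α → Prop} (hPr : MProper R)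
    (hTr : MTrans R) {X : Finset α} {y : α} (hXy : R X y) : ∃ x ∈ X, ¬ R {y} x := by
  induction X using Finset.strongInduction with
  | H X ih =>
    by_contra! hrev
    obtain ⟨x, hx⟩ := nonempty_iff_ne_empty.mpr (hPr X y hXy)
    have hsub := singleton_union_sdiff_pair_ssubset y hx
    obtain ⟨x', hx', hnot⟩ := ih _ hsub (hTr {y} x X y (hrev x hx) hXy hx)
    exact hnot (hrev x' (hsub.subset hx'))

end

/-- a proper transitive menu-item relation has no reversal. -/
theorem menuRel_no_reversal {α : Type*} [DecidableEq α]
    (Rp : Finset α → α → Prop) (hPr : MProper Rp) (hTr : MTrans Rp) :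
    (∀ (X : Finset α) (y : α), Rp X y → ∃ x ∈ X, ¬ Rp {y} x) ∧
    (∀ x y : α, Rp {x} y → ¬ Rp {y} x) := by
  refine ⟨fun X y => hTr.exists_mem_not_singleton_rel hPr, fun x y hxy hyx => ?_⟩
  obtain ⟨x', hx', hnot⟩ := hTr.exists_mem_not_singleton_rel hPr hxy
  rw [mem_singleton] at hx'
  exact hnot (hx' ▸ hyx)
end

section
/- Suppose (≿, c) on the simplex Δ(Z) satisfies the Independence axiom for both ≿ and c (specifically, c(αA + (1−α){p}) = α·c(A) + (1−α){p} for all finite menus A, lotteries p, and α ∈ (0,1), and p ≿ q implies αp + (1−α)r ≿ αq + (1−α)r). Define B(p) = {q ∈ Δ(Z) : p ≿ q and {q} = c({p, q})}. Then B(p) is a convex cone with vertex p: if q ∈ B(p) and α ∈ (0,1), then αp + (1−α)q ∈ B(p) and conversely; and if q, r ∈ B(p) then αq + (1−α)r ∈ B(p), where the latter also uses IUA. -/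
open Finset
open scoped Classical

/-- `B(p)`: lotteries weakly worse than `p` that nevertheless defeat `p`
in pairwise choice. -/
def Bset {Z : Type*} (pref : (Z → ℝ) → (Z → ℝ) → Prop)
    (c : Finset (Z → ℝ) → Finset (Z → ℝ)) (p q : Z → ℝ) : Prop :=
  pref p q ∧ c {p, q} = {q}

/-- `W(p)`: lotteries weakly better than `p` that nevertheless lose to `p`
in pairwise choice. -/
def Wset {Z : Type*} (pref : (Z → ℝ) → (Z → ℝ) → Prop)
    (c : Finset (Z → ℝ) → Finset (Z → ℝ)) (p q : Z → ℝ) : Prop :=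
  pref q p ∧ q ∉ c {p, q}

/-- Independence axiom for the true preference. -/
def PrefIndep {Z : Type*} (pref : (Z → ℝ) → (Z → ℝ) → Prop) : Prop :=
  ∀ (p q r : Z → ℝ), ∀ a : ℝ, a ∈ Set.Ioo (0:ℝ) 1 →
    pref p q → pref (a • p + (1 - a) • r) (a • q + (1 - a) • r)

/-- Independence axiom for choice. -/
def ChoiceIndep {Z : Type*} (c : Finset (Z → ℝ) → Finset (Z → ℝ)) : Prop :=
  ∀ (A : Finset (Z → ℝ)) (p : Z → ℝ), ∀ a : ℝ, a ∈ Set.Ioo (0:ℝ) 1 →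
    c (A.image fun q => a • q + (1 - a) • p) =
      (c A).image fun q => a • q + (1 - a) • p

/-- Irrelevance of Unjustifiable Alternatives on the lottery domain. -/
def IUAL {Z : Type*} (pref : (Z → ℝ) → (Z → ℝ) → Prop)
    (c : Finset (Z → ℝ) → Finset (Z → ℝ)) : Prop :=
  ∀ (A : Finset (Z → ℝ)) (q : Z → ℝ), q ∈ A → (∀ b ∈ c A, pref q b) → q ∉ c A →
    ∀ B : Finset (Z → ℝ), A ⊆ B → c (B.erase q) = c B


/-! Independence transports the relation `Bset` along every mixture with a fixed lottery, and IUA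
makes it transitive; together these give closure under mixing. For the converse direction of the
cone property, `p ≿ a p + (1 - a) q` yields `p ≿ p + b (1 - a) (q - p)` for every `b ∈ (0, 1)`,
and finitely many such steps reach `q` by transitivity (an Archimedean argument: no continuity of
`≿` is assumed). -/

lemma Transitive.rel_add_succ_nsmul {M : Type*} [AddMonoid M] {R : M → M → Prop}
    (hR : Transitive R) {e : M} (h : ∀ w, R w (w + e)) (n : ℕ) (w : M) :
    R w (w + (n + 1) • e) := by
  induction n generalizing w with
  | zero => simpa using h w
  | succ n ih => simpa [succ_nsmul', add_assoc] using hR (h w) (ih (w + e))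

section Preference

variable {Z : Type*} {pref : (Z → ℝ) → (Z → ℝ) → Prop}

lemma PrefIndep.add_smul_sub (hPI : PrefIndep pref) {x y : Z → ℝ} (h : pref x y)
    {b : ℝ} (hb : b ∈ Set.Ioo (0:ℝ) 1) (w : Z → ℝ) : pref w (w + b • (y - x)) := by
  have hb1 : (1:ℝ) - b ≠ 0 := by linarith [hb.2]
  have key := hPI x y ((1 - b)⁻¹ • (w - b • x)) b hb h
  rw [smul_inv_smul₀ hb1] at key
  convert key using 1 <;> module

lemma PrefIndep.of_mix (hPI : PrefIndep pref) (htrans : Transitive pref) {p q : Z → ℝ} {a : ℝ}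
    (ha : a ∈ Set.Ioo (0:ℝ) 1) (h : pref p (a • p + (1 - a) • q)) : pref p q := by
  have h1a : 0 < 1 - a := by linarith [ha.2]
  obtain ⟨n, hn⟩ := exists_nat_gt (1 - a)⁻¹
  have hN : 1 < ((n:ℝ) + 1) * (1 - a) := by
    rw [inv_lt_iff_one_lt_mul₀ h1a] at hn
    linarith
  set b := (((n:ℝ) + 1) * (1 - a))⁻¹
  have hb : b ∈ Set.Ioo (0:ℝ) 1 := ⟨by positivity, inv_lt_one_of_one_lt₀ hN⟩
  have key := htrans.rel_add_succ_nsmul (hPI.add_smul_sub h hb) n p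
  convert key using 1
  rw [← Nat.cast_smul_eq_nsmul ℝ]
  push_cast
  have hb_mul : ((n:ℝ) + 1) * b * (1 - a) = 1 := by
    simp only [b]
    field_simp
  linear_combination (norm := module) (-hb_mul) • (q - p)

end Preference

section Choice

variable {Z : Type*} {pref : (Z → ℝ) → (Z → ℝ) → Prop} {c : Finset (Z → ℝ) → Finset (Z → ℝ)}

lemma ChoiceIndep.pair (hCI : ChoiceIndep c) {a : ℝ} (ha : a ∈ Set.Ioo (0:ℝ) 1) (x y r : Z → ℝ) :
    c {a • x + (1 - a) • r, a • y + (1 - a) • r} =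
      (c {x, y}).image fun z => a • z + (1 - a) • r := by
  simpa using hCI {x, y} r a ha

lemma choice_self_singleton (hsub : ∀ A, c A ⊆ A)
    (hnem : ∀ A : Finset (Z → ℝ), A.Nonempty → (c A).Nonempty) (x : Z → ℝ) : c {x} = {x} :=
  (Finset.subset_singleton_iff.mp (hsub _)).resolve_left
    (hnem _ (Finset.singleton_nonempty x)).ne_empty

lemma Bset.mix (hPI : PrefIndep pref) (hCI : ChoiceIndep c) {x y : Z → ℝ}
    (h : Bset pref c x y) {a : ℝ} (ha : a ∈ Set.Ioo (0:ℝ) 1) (r : Z → ℝ) :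
    Bset pref c (a • x + (1 - a) • r) (a • y + (1 - a) • r) :=
  ⟨hPI x y r a ha h.1, by rw [hCI.pair ha, h.2, Finset.image_singleton]⟩

lemma Bset.trans (htrans : Transitive pref) (hsub : ∀ A, c A ⊆ A)
    (hnem : ∀ A : Finset (Z → ℝ), A.Nonempty → (c A).Nonempty) (hIUA : IUAL pref c)
    {x y z : Z → ℝ} (hxy : Bset pref c x y) (hyz : Bset pref c y z) : Bset pref c x z := by
  refine ⟨htrans hxy.1 hyz.1, ?_⟩
  rcases eq_or_ne x y with rfl | hne_xy
  · exact hyz.2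
  rcases eq_or_ne y z with rfl | hne_yz
  · exact hxy.2
  rcases eq_or_ne x z with rfl | hne_xz
  · rw [Finset.pair_eq_singleton]
    exact choice_self_singleton hsub hnem x
  -- Deleting `x`, then `y`, from `{x, y, z}`: each is unchosen yet weakly better than the choice.
  have hdrop_x : c {x, y, z} = {z} := by
    rw [← hIUA {x, y} x (by simp) (by simpa [hxy.2] using hxy.1) (by simpa [hxy.2] using hne_xy)
      {x, y, z} (Finset.insert_subset_insert _ (by simp))]
    rw [Finset.erase_insert (by simp [hne_xy, hne_xz]), hyz.2]
  have hdrop_y := hIUA {x, y, z} y (by simp) (by simpa [hdrop_x] using hyz.1)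
    (by simpa [hdrop_x] using hne_yz) {x, y, z} subset_rfl
  rwa [hdrop_x, Finset.erase_insert_of_ne hne_xy, Finset.erase_insert (by simpa using hne_yz)]
    at hdrop_y

lemma Bset_iff_mix (hPI : PrefIndep pref) (hCI : ChoiceIndep c) (htrans : Transitive pref)
    {p q : Z → ℝ} {a : ℝ} (ha : a ∈ Set.Ioo (0:ℝ) 1) :
    Bset pref c p q ↔ Bset pref c p (a • p + (1 - a) • q) := by
  have ha' : 1 - a ∈ Set.Ioo (0:ℝ) 1 := ⟨by linarith [ha.2], by linarith [ha.1]⟩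
  have hp : (1 - a) • p + (1 - (1 - a)) • p = p := by module
  have hq : (1 - a) • q + (1 - (1 - a)) • p = a • p + (1 - a) • q := by module
  refine ⟨fun h => ?_, fun h => ⟨hPI.of_mix htrans ha h.1, ?_⟩⟩
  · simpa only [hp, hq] using h.mix hPI hCI ha' p
  · have hinj : Function.Injective fun z : Z → ℝ => (1 - a) • z + (1 - (1 - a)) • p :=
      fun _ _ hz => smul_right_injective _ ha'.1.ne' (add_right_cancel hz)
    apply Finset.image_injective hinj
    rw [← hCI.pair ha', hp, hq, h.2, Finset.image_singleton, hq]

end Choice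

theorem Bset_convex_cone_general {Z : Type*} [Fintype Z]
    (pref : (Z → ℝ) → (Z → ℝ) → Prop) (c : Finset (Z → ℝ) → Finset (Z → ℝ))
    (htrans : Transitive pref)
    (hsub : ∀ A, c A ⊆ A) (hnem : ∀ A : Finset (Z → ℝ), A.Nonempty → (c A).Nonempty)
    (hPI : PrefIndep pref) (hCI : ChoiceIndep c) (hIUA : IUAL pref c)
    (p : Z → ℝ) :
    (∀ q ∈ stdSimplex ℝ Z, ∀ a ∈ Set.Ioo (0:ℝ) 1,
        (Bset pref c p q ↔ Bset pref c p (a • p + (1 - a) • q))) ∧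
    (∀ q ∈ stdSimplex ℝ Z, ∀ r ∈ stdSimplex ℝ Z, ∀ a ∈ Set.Ioo (0:ℝ) 1,
        Bset pref c p q → Bset pref c p r →
          Bset pref c p (a • q + (1 - a) • r)) := by
  refine ⟨fun q _ a ha => Bset_iff_mix hPI hCI htrans ha, fun q _ r _ a ha hq hr => ?_⟩
  have hp_mid : Bset pref c p (a • p + (1 - a) • r) := (Bset_iff_mix hPI hCI htrans ha).mp hr
  exact hp_mid.trans htrans hsub hnem hIUA (hq.mix hPI hCI ha r)

/-- under Independence (and IUA), `B(p)` is a convex cone with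
vertex `p`. -/
theorem Bset_convex_cone {Z : Type*} [Fintype Z]
    (pref : (Z → ℝ) → (Z → ℝ) → Prop) (c : Finset (Z → ℝ) → Finset (Z → ℝ))
    (hcomp : ∀ p q : Z → ℝ, pref p q ∨ pref q p) (htrans : Transitive pref)
    (hsub : ∀ A, c A ⊆ A) (hnem : ∀ A : Finset (Z → ℝ), A.Nonempty → (c A).Nonempty)
    (hPI : PrefIndep pref) (hCI : ChoiceIndep c) (hIUA : IUAL pref c)
    (p : Z → ℝ) (hp : p ∈ stdSimplex ℝ Z) :
    (∀ q ∈ stdSimplex ℝ Z, ∀ a ∈ Set.Ioo (0:ℝ) 1,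
        (Bset pref c p q ↔ Bset pref c p (a • p + (1 - a) • q))) ∧
    (∀ q ∈ stdSimplex ℝ Z, ∀ r ∈ stdSimplex ℝ Z, ∀ a ∈ Set.Ioo (0:ℝ) 1,
        Bset pref c p q → Bset pref c p r →
          Bset pref c p (a • q + (1 - a) • r)) :=
  Bset_convex_cone_general pref c htrans hsub hnem hPI hCI hIUA p
end

section
/- Under the Independence axioms for ≿ and c, the sets B(p) and W(p) satisfy a translation property: for lotteries p, p', q, q' ∈ Δ(Z) with q − p = q' − p' (as vectors in ℝ^Z), q ∈ B(p) implies q' ∈ B(p'), and q ∈ W(p) implies q' ∈ W(p'). -/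
open Finset
open scoped Classical

/- Both independence axioms are stated for mixtures only, yet they force invariance under
translations: `p + t = ½ p + ½ (p + 2t) ≿ ½ q + ½ (p + 2t) = ½ p + ½ (q + 2t) ≿ q + t`, and a
translated menu `A + t` mixed half-and-half with `0` is `A` mixed half-and-half with `t`. -/

section Translation

variable {Z : Type*} {pref : (Z → ℝ) → (Z → ℝ) → Prop} {c : Finset (Z → ℝ) → Finset (Z → ℝ)}

theorem PrefIndep.add_right (htrans : Transitive pref) (hPI : PrefIndep pref)
    {p q : Z → ℝ} (h : pref p q) (t : Z → ℝ) : pref (p + t) (q + t) := by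
  have half : (1 / 2 : ℝ) ∈ Set.Ioo (0 : ℝ) 1 := by norm_num
  have hp := hPI p q (p + (2 : ℝ) • t) (1 / 2) half h
  have hq := hPI p q (q + (2 : ℝ) • t) (1 / 2) half h
  have hp_eq : (1 / 2 : ℝ) • p + (1 - 1 / 2 : ℝ) • (p + (2 : ℝ) • t) = p + t := by module
  have hq_eq : (1 / 2 : ℝ) • q + (1 - 1 / 2 : ℝ) • (q + (2 : ℝ) • t) = q + t := by module
  have mid_eq : (1 / 2 : ℝ) • q + (1 - 1 / 2 : ℝ) • (p + (2 : ℝ) • t) =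
      (1 / 2 : ℝ) • p + (1 - 1 / 2 : ℝ) • (q + (2 : ℝ) • t) := by module
  rw [hp_eq, mid_eq] at hp
  rw [hq_eq] at hq
  exact htrans hp hq

theorem ChoiceIndep.image_add_right (hCI : ChoiceIndep c) (A : Finset (Z → ℝ)) (t : Z → ℝ) :
    c (A.image (· + t)) = (c A).image (· + t) := by
  have half : (1 / 2 : ℝ) ∈ Set.Ioo (0 : ℝ) 1 := by norm_num
  set halve : (Z → ℝ) → (Z → ℝ) := fun x => (1 / 2 : ℝ) • x + (1 - 1 / 2 : ℝ) • 0
  have halve_inj : Function.Injective halve := fun x y hxy => by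
    simpa [halve] using hxy
  have halve_add : halve ∘ (· + t) = fun x => (1 / 2 : ℝ) • x + (1 - 1 / 2 : ℝ) • t := by
    funext x
    simp only [halve, Function.comp_apply]
    module
  apply Finset.image_injective halve_inj
  rw [← hCI _ 0 _ half, Finset.image_image, Finset.image_image, halve_add]
  exact hCI A t _ half

theorem Bset.add_right (htrans : Transitive pref) (hPI : PrefIndep pref) (hCI : ChoiceIndep c)
    {p q : Z → ℝ} (h : Bset pref c p q) (t : Z → ℝ) : Bset pref c (p + t) (q + t) := by
  obtain ⟨hpq, hchoice⟩ := h
  refine ⟨hPI.add_right htrans hpq t, ?_⟩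
  have := hCI.image_add_right {p, q} t
  simpa only [Finset.image_insert, Finset.image_singleton, hchoice] using this

theorem Wset.add_right (htrans : Transitive pref) (hPI : PrefIndep pref) (hCI : ChoiceIndep c)
    {p q : Z → ℝ} (h : Wset pref c p q) (t : Z → ℝ) : Wset pref c (p + t) (q + t) := by
  obtain ⟨hqp, hlose⟩ := h
  refine ⟨hPI.add_right htrans hqp t, ?_⟩
  have := hCI.image_add_right {p, q} t
  simp only [Finset.image_insert, Finset.image_singleton] at this
  rwa [this, (add_left_injective t).mem_finset_image]

end Translation

theorem Bset_Wset_translation_general {Z : Type*}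
    (pref : (Z → ℝ) → (Z → ℝ) → Prop) (c : Finset (Z → ℝ) → Finset (Z → ℝ))
    (htrans : Transitive pref)
    (hPI : PrefIndep pref) (hCI : ChoiceIndep c)
    (p p' q q' : Z → ℝ)
    (hshift : q - p = q' - p') :
    (Bset pref c p q → Bset pref c p' q') ∧
    (Wset pref c p q → Wset pref c p' q') := by
  obtain ⟨t, rfl, rfl⟩ : ∃ t, p' = p + t ∧ q' = q + t :=
    ⟨p' - p, by abel, by rw [sub_eq_sub_iff_add_eq_add] at hshift; linear_combination -hshift⟩
  exact ⟨fun h => h.add_right htrans hPI hCI t, fun h => h.add_right htrans hPI hCI t⟩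

/-- Lemma 5: `B(p)` and `W(p)` are translation invariant. -/
theorem Bset_Wset_translation {Z : Type*} [Fintype Z]
    (pref : (Z → ℝ) → (Z → ℝ) → Prop) (c : Finset (Z → ℝ) → Finset (Z → ℝ))
    (hcomp : ∀ p q : Z → ℝ, pref p q ∨ pref q p) (htrans : Transitive pref)
    (hsub : ∀ A, c A ⊆ A) (hnem : ∀ A : Finset (Z → ℝ), A.Nonempty → (c A).Nonempty)
    (hPI : PrefIndep pref) (hCI : ChoiceIndep c)
    (p p' q q' : Z → ℝ)
    (hp : p ∈ stdSimplex ℝ Z) (hp' : p' ∈ stdSimplex ℝ Z)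
    (hq : q ∈ stdSimplex ℝ Z) (hq' : q' ∈ stdSimplex ℝ Z)
    (hshift : q - p = q' - p') :
    (Bset pref c p q → Bset pref c p' q') ∧
    (Wset pref c p q → Wset pref c p' q') :=
  Bset_Wset_translation_general pref c htrans hPI hCI p p' q q' hshift
end

section
/- If c has a justifiability representation for some strict preference (i.e., there exists a total order ≻ such that (≻, c) has a justifiability representation with c a choice function), then the revealed preference relation P is acyclic, where c(A ∪ {a}) P a is declared whenever c(B) ≠ c(B ∪ {a}) for some B ⊇ A and a ≠ c(A ∪ {a}). Moreover, the true preference in every justifiability representation for c extends P. -/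
open Finset

/-- A justifiability representation for a choice function `c`: `c A` is the
`pref`-maximum of the justifiable set `M(A)`. -/
def JustRepFn {α : Type*} (pref : α → α → Prop) (c : Finset α → α)
    (M : Set (α → α → Prop)) : Prop :=
  M.Nonempty ∧ (∀ r ∈ M, TotalOrderRel r) ∧ TotalOrderRel pref ∧
    ∀ A : Finset α, A.Nonempty →
      c A ∈ justSet M A ∧ ∀ y ∈ justSet M A, pref (c A) y

/-- Revealed preference: `x P a` if removing `a` matters for some menu `B` and
`x` is chosen over `a` from some `A ∪ {a}` with `A ⊆ B`. -/
def RevP {α : Type*} [DecidableEq α] (c : Finset α → α) (x a : α) : Prop :=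
  ∃ B A : Finset α, B.Nonempty ∧ A ⊆ B ∧ c B ≠ c (insert a B) ∧
    a ≠ c (insert a A) ∧ x = c (insert a A)

/-! A menu `B` whose choice changes when `a` is added must have `a` justifiable in `insert a B`:
otherwise the justifiable sets of `B` and `insert a B` coincide, and so do their `pref`-maxima.
Justifiability of `a` passes to the smaller menu `insert a A`, where `a` is beaten by the choice,
so `pref` strictly extends revealed preference, and a revealed cycle would be a cycle of the strict
part of `pref`. -/

namespace TotalOrderRel

variable {α : Type*} {r : α → α → Prop}

lemma refl (h : TotalOrderRel r) (a : α) : r a a := (h.1 a a).elim id id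

lemma strict_trans (h : TotalOrderRel r) {a b c : α} (hab : r a b ∧ ¬ r b a)
    (hbc : r b c ∧ ¬ r c b) : r a c ∧ ¬ r c a :=
  ⟨h.2.1 hab.1 hbc.1, fun hca => hbc.2 (h.2.1 hca hab.1)⟩

lemma not_transGen_self_of_le_strict (h : TotalOrderRel r) {s : α → α → Prop}
    (hs : s ≤ fun x y => r x y ∧ ¬ r y x) (a : α) : ¬ Relation.TransGen s a a := by
  have : IsTrans α (fun x y => r x y ∧ ¬ r y x) := ⟨fun _ _ _ => h.strict_trans⟩
  intro hcyc
  have haa := Relation.transGen_minimal hs a a hcyc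
  exact haa.2 haa.1

end TotalOrderRel

section justSet

variable {α : Type*} {M : Set (α → α → Prop)} {A B : Finset α} {a x : α}

lemma mem_justSet : x ∈ justSet M A ↔ ∃ r ∈ M, x ∈ A ∧ ∀ y ∈ A, r x y := by
  simp only [justSet, Set.mem_iUnion, argmaxOn, Set.mem_ofPred_eq, Finset.mem_coe, exists_prop]

lemma mem_justSet_of_subset (hx : x ∈ justSet M B) (hxA : x ∈ A) (hAB : A ⊆ B) :
    x ∈ justSet M A := by
  obtain ⟨r, hr, -, hmax⟩ := mem_justSet.1 hx
  exact mem_justSet.2 ⟨r, hr, hxA, fun y hy => hmax y (hAB hy)⟩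

variable [DecidableEq α]

lemma justSet_insert_of_notMem (hM : ∀ r ∈ M, TotalOrderRel r)
    (ha : a ∉ justSet M (insert a B)) : justSet M (insert a B) = justSet M B := by
  ext z
  constructor
  · intro hz
    obtain ⟨-, -, hzB, -⟩ := mem_justSet.1 hz
    have hza : z ≠ a := by rintro rfl; exact ha hz
    exact mem_justSet_of_subset hz ((Finset.mem_insert.1 hzB).resolve_left hza)
      (Finset.subset_insert a B)
  · intro hz
    obtain ⟨r, hr, hzB, hmax⟩ := mem_justSet.1 hz
    have hrtot := hM r hr
    rcases hrtot.1 z a with hza | haz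
    · refine mem_justSet.2 ⟨r, hr, Finset.mem_insert_of_mem hzB, fun y hy => ?_⟩
      rcases Finset.mem_insert.1 hy with rfl | hy
      exacts [hza, hmax y hy]
    · refine absurd (mem_justSet.2 ⟨r, hr, Finset.mem_insert_self a B, fun y hy => ?_⟩) ha
      rcases Finset.mem_insert.1 hy with rfl | hy
      exacts [hrtot.refl y, hrtot.2.1 haz (hmax y hy)]

end justSet

namespace JustRepFn

variable {α : Type*} {pref : α → α → Prop} {c : Finset α → α} {M : Set (α → α → Prop)}

lemma choice_eq_of_justSet_eq (h : JustRepFn pref c M) {A B : Finset α} (hA : A.Nonempty)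
    (hB : B.Nonempty) (hAB : justSet M A = justSet M B) : c A = c B := by
  obtain ⟨hcA, hmaxA⟩ := h.2.2.2 A hA
  obtain ⟨hcB, hmaxB⟩ := h.2.2.2 B hB
  exact h.2.2.1.2.2 _ _ (hmaxA _ (hAB ▸ hcB)) (hmaxB _ (hAB.symm ▸ hcA))

variable [DecidableEq α]

lemma mem_justSet_insert_of_choice_ne (h : JustRepFn pref c M) {B : Finset α} {a : α}
    (hB : B.Nonempty) (hne : c B ≠ c (insert a B)) : a ∈ justSet M (insert a B) := by
  by_contra ha
  exact hne (h.choice_eq_of_justSet_eq hB (Finset.insert_nonempty a B)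
    (justSet_insert_of_notMem h.2.1 ha).symm)

lemma revP_strict (h : JustRepFn pref c M) {x a : α} (hxa : RevP c x a) :
    pref x a ∧ ¬ pref a x := by
  obtain ⟨B, A, hB, hAB, hne, haA, rfl⟩ := hxa
  have ha : a ∈ justSet M (insert a A) :=
    mem_justSet_of_subset (h.mem_justSet_insert_of_choice_ne hB hne) (Finset.mem_insert_self a A)
      (Finset.insert_subset_insert a hAB)
  have hca : pref (c (insert a A)) a := (h.2.2.2 _ (Finset.insert_nonempty a A)).2 a ha
  exact ⟨hca, fun hac => haA (h.2.2.1.2.2 _ _ hac hca)⟩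

end JustRepFn

theorem justRepFn_revP_acyclic_general {α : Type*} [DecidableEq α] (c : Finset α → α)
    (hrep : ∃ (pref : α → α → Prop) (M : Set (α → α → Prop)), JustRepFn pref c M) :
    (∀ a : α, ¬ Relation.TransGen (RevP c) a a) ∧
    ∀ (pref : α → α → Prop) (M : Set (α → α → Prop)), JustRepFn pref c M →
      ∀ x a : α, RevP c x a → pref x a ∧ ¬ pref a x := by
  obtain ⟨pref, M, hrep⟩ := hrep
  exact ⟨hrep.2.2.1.not_transGen_self_of_le_strict fun _ _ => hrep.revP_strict,
    fun _ _ h _ _ => h.revP_strict⟩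

/-- a justifiability representation implies that revealed
preference is acyclic, and every true preference extends it. -/
theorem justRepFn_revP_acyclic {α : Type*} [DecidableEq α] (c : Finset α → α)
    (hc : ∀ A : Finset α, A.Nonempty → c A ∈ A)
    (hrep : ∃ (pref : α → α → Prop) (M : Set (α → α → Prop)), JustRepFn pref c M) :
    (∀ a : α, ¬ Relation.TransGen (RevP c) a a) ∧
    ∀ (pref : α → α → Prop) (M : Set (α → α → Prop)), JustRepFn pref c M →
      ∀ x a : α, RevP c x a → pref x a ∧ ¬ pref a x :=
  justRepFn_revP_acyclic_general c hrep
end
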